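/- Let (sₘ) be a positive decreasing sequence tending to 0 and ρ > 0. If m · ln(sₘ⁻¹) · sₘ^ρ → 0 as m → ∞, then (ln r) · n(r)/r^ρ → 0 as r → ∞, where n(r) = #{m : sₘ⁻¹ < r}. -/
import Mathlib


open Filter

lemma hd_aux {ρ : ℝ} {x : ℝ} (hx : 0 < x) :
    HasDerivAt (fun x : ℝ => Real.log x / x ^ ρ)
      ((x⁻¹ * x ^ ρ - Real.log x * (ρ * x ^ (ρ - 1))) / (x ^ ρ) ^ 2) x :=
  (Real.hasDerivAt_log hx.ne').div (Real.hasDerivAt_rpow_const (Or.inl hx.ne'))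
    (by positivity)

lemma log_div_rpow_anti {ρ : ℝ} (hρ : 0 < ρ) :
    AntitoneOn (fun x : ℝ => Real.log x / x ^ ρ) (Set.Ici (Real.exp (1/ρ))) := by
  have hc : (0:ℝ) < Real.exp (1/ρ) := Real.exp_pos _
  apply antitoneOn_of_deriv_nonpos (convex_Ici _)
  · intro x hx
    simp only [Set.mem_Ici] at hx
    exact (hd_aux (lt_of_lt_of_le hc hx)).continuousAt.continuousWithinAt
  · intro x hx
    rw [interior_Ici] at hx
    exact (hd_aux (hc.trans hx)).differentiableAt.differentiableWithinAt
  · intro x hx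
    rw [interior_Ici] at hx
    have hx0 : 0 < x := hc.trans hx
    rw [(hd_aux hx0).deriv]
    apply div_nonpos_of_nonpos_of_nonneg _ (by positivity)
    have h1 : x⁻¹ * x ^ ρ = x ^ (ρ - 1) := by
      rw [Real.rpow_sub hx0, Real.rpow_one]; field_simp
    have h2 : 1/ρ ≤ Real.log x := by
      rw [← Real.log_exp (1/ρ)]
      exact Real.log_le_log (Real.exp_pos _) hx.le
    rw [h1]
    have h3 : 1 ≤ ρ * Real.log x := by
      rw [div_le_iff₀' hρ] at h2 <;> linarith
    nlinarith [Real.rpow_pos_of_pos hx0 (ρ-1)]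

/-- If `(sₘ)` is positive, decreasing to `0`, and `m · ln(sₘ⁻¹) · sₘ^ρ → 0`, then
`(ln r) · n(r)/r^ρ → 0` as `r → ∞`, where `n(r) = #{m : sₘ⁻¹ < r}`. -/
theorem stmt10 (s : ℕ → ℝ) (ρ : ℝ) (hρ : 0 < ρ)
    (hs_pos : ∀ m, 0 < s m) (hs_anti : StrictAnti s)
    (hs0 : Tendsto s atTop (nhds 0))
    (ho : Tendsto (fun m : ℕ => (m : ℝ) * Real.log ((s m)⁻¹) * (s m) ^ ρ)
      atTop (nhds 0)) :
    Tendsto (fun r : ℝ => Real.log r * (Set.ncard {m : ℕ | (s m)⁻¹ < r} : ℝ) / r ^ ρ)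
      atTop (nhds 0) := by
  -- inverse tends to infinity
  have hinv_mono : StrictMono fun m => (s m)⁻¹ := fun a b hab => by
    exact inv_strictAnti₀ (hs_pos b) (hs_anti hab)
  have hinv_top : Tendsto (fun m => (s m)⁻¹) atTop atTop := by
    apply Tendsto.inv_tendsto_nhdsGT_zero
    rw [tendsto_nhdsWithin_iff]
    exact ⟨hs0, Eventually.of_forall fun m => hs_pos m⟩
  have hne : ∀ r : ℝ, {m : ℕ | r ≤ (s m)⁻¹}.Nonempty := by
    intro r
    obtain ⟨m, hm⟩ := (hinv_top.eventually_ge_atTop r).exists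
    exact ⟨m, hm⟩
  set N : ℝ → ℕ := fun r => sInf {m : ℕ | r ≤ (s m)⁻¹} with hN
  have hset : ∀ r : ℝ, {m : ℕ | (s m)⁻¹ < r} = Set.Iio (N r) := by
    intro r
    ext m
    simp only [Set.mem_setOf_eq, Set.mem_Iio]
    constructor
    · intro hm
      by_contra h
      push_neg at h
      have : r ≤ (s (N r))⁻¹ := Nat.sInf_mem (hne r)
      exact absurd (this.trans (hinv_mono.monotone h)) (not_le.mpr hm)
    · intro hm
      have := Nat.notMem_of_lt_sInf hm
      simpa using not_le.mp this
  have hncard : ∀ r : ℝ, (Set.ncard {m : ℕ | (s m)⁻¹ < r} : ℝ) = (N r : ℝ) := by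
    intro r
    rw [hset r, ← Finset.coe_range, Set.ncard_coe_finset, Finset.card_range]
  simp only [hncard]
  -- auxiliary limits
  have hB : Tendsto (fun x : ℝ => Real.log x / x ^ ρ) atTop (nhds 0) :=
    (isLittleO_log_rpow_atTop hρ).tendsto_div_nhds_zero
  have hinv_eq : ∀ m, Real.log ((s m)⁻¹) / ((s m)⁻¹) ^ ρ
      = Real.log ((s m)⁻¹) * s m ^ ρ := by
    intro m
    rw [Real.inv_rpow (hs_pos m).le, div_eq_mul_inv, inv_inv]
  have hlog_s : Tendsto (fun m => Real.log ((s m)⁻¹) * s m ^ ρ) atTop (nhds 0) := by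
    exact (hB.comp hinv_top).congr hinv_eq
  have hcomb : Tendsto (fun m : ℕ => ((m : ℝ) + 1) * Real.log ((s m)⁻¹) * s m ^ ρ)
      atTop (nhds 0) := by
    have := ho.add hlog_s
    simp only [add_zero] at this
    convert this using 2 with m
    ring
  rw [NormedAddCommGroup.tendsto_nhds_zero]
  intro ε hε
  -- choose M
  have hM1 : ∀ᶠ m : ℕ in atTop, ((m : ℝ) + 1) * Real.log ((s m)⁻¹) * s m ^ ρ < ε := by
    filter_upwards [(NormedAddCommGroup.tendsto_nhds_zero.mp hcomb) ε hε] with m hm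
    exact lt_of_le_of_lt (le_abs_self _) hm
  have hM2 : ∀ᶠ m : ℕ in atTop, Real.exp (1/ρ) ≤ (s m)⁻¹ :=
    hinv_top.eventually_ge_atTop _
  obtain ⟨M, hM⟩ := (hM1.and hM2).exists_forall_of_atTop
  -- eventual bounds in r
  have h3 : ∀ᶠ r : ℝ in atTop, (M : ℝ) * (Real.log r / r ^ ρ) < ε := by
    have := hB.const_mul (M : ℝ)
    rw [mul_zero] at this
    exact this.eventually_lt_const hε
  filter_upwards [eventually_ge_atTop (1:ℝ), eventually_ge_atTop (Real.exp (1/ρ)), h3]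
    with r hr1 hr2 hr3
  have hr0 : (0:ℝ) < r := lt_of_lt_of_le one_pos hr1
  have hlog : 0 ≤ Real.log r := Real.log_nonneg hr1
  have hval : 0 ≤ Real.log r * (N r : ℝ) / r ^ ρ := by positivity
  rw [Real.norm_of_nonneg hval]
  by_cases hcase : N r ≤ M
  · calc Real.log r * (N r : ℝ) / r ^ ρ = (N r : ℝ) * (Real.log r / r ^ ρ) := by ring
      _ ≤ (M : ℝ) * (Real.log r / r ^ ρ) := by
          apply mul_le_mul_of_nonneg_right (by exact_mod_cast hcase)
          positivity
      _ < ε := hr3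
  · push_neg at hcase
    set m := N r - 1 with hm_def
    have hNpos : 0 < N r := lt_of_le_of_lt (Nat.zero_le M) hcase
    have hsucc : m + 1 = N r := Nat.succ_pred_eq_of_pos hNpos
    have hmM : M ≤ m := Nat.le_pred_of_lt hcase
    have hmlt : (s m)⁻¹ < r := by
      have := Set.ext_iff.mp (hset r) m
      exact this.mpr (Nat.sub_lt hNpos one_pos)
    have hmexp : Real.exp (1/ρ) ≤ (s m)⁻¹ := (hM m hmM).2
    have hkey : Real.log r / r ^ ρ ≤ Real.log ((s m)⁻¹) * s m ^ ρ := by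
      rw [← hinv_eq m]
      exact log_div_rpow_anti hρ (Set.mem_Ici.mpr hmexp)
        (Set.mem_Ici.mpr hr2) hmlt.le
    calc Real.log r * (N r : ℝ) / r ^ ρ = (N r : ℝ) * (Real.log r / r ^ ρ) := by ring
      _ ≤ (N r : ℝ) * (Real.log ((s m)⁻¹) * s m ^ ρ) := by
          apply mul_le_mul_of_nonneg_left hkey (by positivity)
      _ = ((m : ℝ) + 1) * Real.log ((s m)⁻¹) * s m ^ ρ := by
          rw [← hsucc]; push_cast; ring
      _ < ε := (hM m hmM).1
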